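/- For $e_1 > 6$, define $I_+(e_1, 0) = \int_0^1 \frac{dg}{\sqrt{\frac{2}{3}(1-g)g(e_1 g + 6 + e_1)}}$ and $I_+(1/6, 0)$ correspondingly. Then $I_+(1/6, 0) = \int_0^{1/6}\frac{df}{\sqrt{-\frac{2}{3}(f-\frac{1}{6})f(f+\frac{37}{6})}} > \frac{3\pi}{\sqrt{38}} > \frac{\pi}{4}$. -/

import Mathlib

/-!
On `(0, 1/6)` the cubic under the root is `(2/3) (1/6 - f) f (f + 37/6) < (38/9) (1/6 - f) f`,
so the integrand exceeds `(3/√38) / √((1/6 - f) f)`, whose integral is `3π/√38` because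
`∫ₐᵇ dx / √((b - x)(x - a)) = π`: the function `arcsin ((2x - a - b)/(b - a))` is a primitive.
-/

open Real Set MeasureTheory intervalIntegral

theorem hasDerivAt_arcsin_chord {a b x : ℝ} (hx : x ∈ Ioo a b) :
    HasDerivAt (fun y => arcsin ((2 * y - a - b) / (b - a))) (1 / √((b - x) * (x - a))) x := by
  obtain ⟨hax, hxb⟩ := hx
  have hba : 0 < b - a := by linarith
  have hlo : (2 * x - a - b) / (b - a) ≠ -1 := by
    rw [Ne, div_eq_iff hba.ne']; intro h; linarith
  have hhi : (2 * x - a - b) / (b - a) ≠ 1 := by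
    rw [Ne, div_eq_iff hba.ne']; intro h; linarith
  have hinner : HasDerivAt (fun y => (2 * y - a - b) / (b - a)) (2 / (b - a)) x := by
    simpa using ((((hasDerivAt_id x).const_mul 2).sub_const a).sub_const b).div_const (b - a)
  refine ((hasDerivAt_arcsin hlo hhi).comp x hinner).congr_deriv ?_
  have hsq : 1 - ((2 * x - a - b) / (b - a)) ^ 2 = (2 / (b - a)) ^ 2 * ((b - x) * (x - a)) := by
    field_simp; ring
  rw [hsq, sqrt_mul (by positivity), sqrt_sq (by positivity)]
  have : 0 < √((b - x) * (x - a)) := sqrt_pos.2 (by nlinarith)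
  field_simp

theorem intervalIntegrable_one_div_sqrt_chord {a b : ℝ} (hab : a ≤ b) :
    IntervalIntegrable (fun x => 1 / √((b - x) * (x - a))) volume a b :=
  (intervalIntegrable_iff_integrableOn_Ioc_of_le hab).2 <|
    integrableOn_deriv_of_nonneg (by fun_prop) (fun _ hx => hasDerivAt_arcsin_chord hx)
      (fun _ _ => by positivity)

theorem integral_one_div_sqrt_chord {a b : ℝ} (hab : a < b) :
    ∫ x in a..b, 1 / √((b - x) * (x - a)) = π := by
  rw [integral_eq_sub_of_hasDerivAt_of_le hab.le (by fun_prop)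
    (fun _ hx => hasDerivAt_arcsin_chord hx) (intervalIntegrable_one_div_sqrt_chord hab.le)]
  have hba : b - a ≠ 0 := sub_ne_zero.2 hab.ne'
  rw [show (2 * b - a - b) / (b - a) = 1 by field_simp; ring,
    show (2 * a - a - b) / (b - a) = -1 by field_simp; ring, arcsin_one, arcsin_neg_one]
  ring

theorem integral_one_div_sqrt_const_mul (f : ℝ → ℝ) {c : ℝ} (hc : 0 ≤ c) (a b : ℝ) :
    ∫ x in a..b, 1 / √(c * f x) = (∫ x in a..b, 1 / √(f x)) / √c := by
  have h : ∀ x, 1 / √(c * f x) = 1 / √(f x) / √c := fun x => by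
    rw [sqrt_mul hc, div_div, mul_comm]
  simp_rw [h, intervalIntegral.integral_div]

theorem IntervalIntegrable.one_div_sqrt_of_le {p q : ℝ → ℝ} {a b : ℝ} (hab : a ≤ b)
    (hp : IntervalIntegrable (fun x => 1 / √(p x)) volume a b) (hq : Measurable q)
    (hpq : ∀ x ∈ Ioo a b, 0 < p x ∧ p x ≤ q x) :
    IntervalIntegrable (fun x => 1 / √(q x)) volume a b := by
  refine hp.mono_fun' ((hq.sqrt.const_div 1).aestronglyMeasurable) ?_
  rw [uIoc_of_le hab, ← Measure.restrict_congr_set Ioo_ae_eq_Ioc]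
  refine ae_restrict_of_forall_mem measurableSet_Ioo fun x hx => ?_
  obtain ⟨hp0, hle⟩ := hpq x hx
  dsimp only
  rw [norm_of_nonneg (by positivity)]
  exact one_div_le_one_div_of_le (sqrt_pos.2 hp0) (sqrt_le_sqrt hle)

theorem intervalIntegral.integral_lt_integral_of_lt_on_Ioo {f g : ℝ → ℝ} {a b : ℝ} (hab : a < b)
    (hf : IntervalIntegrable f volume a b) (hg : IntervalIntegrable g volume a b)
    (hlt : ∀ x ∈ Ioo a b, f x < g x) :
    ∫ x in a..b, f x < ∫ x in a..b, g x := by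
  rw [← sub_pos, ← integral_sub hg hf]
  exact intervalIntegral_pos_of_pos_on (hg.sub hf) (fun x hx => sub_pos.2 (hlt x hx)) hab

/-- The estimate `I₊(1/6, 0) > 3π/√38 > π/4`. -/
theorem Iplus_one_sixth_gt :
    (∫ f in (0:ℝ)..(1/6),
        1 / Real.sqrt (-(2/3) * (f - 1/6) * f * (f + 37/6))) > 3 * π / Real.sqrt 38 ∧
    3 * π / Real.sqrt 38 > π / 4 := by
  have cubic_bounds : ∀ x ∈ Ioo (0:ℝ) (1/6), 0 < (1/6 - x) * (x - 0) ∧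
      (1/6 - x) * (x - 0) ≤ -(2/3) * (x - 1/6) * x * (x + 37/6) ∧
      -(2/3) * (x - 1/6) * x * (x + 37/6) < 38/9 * ((1/6 - x) * (x - 0)) := by
    rintro x ⟨hx0, hx6⟩
    have hr : 0 < (1/6 - x) * (x - 0) := by nlinarith
    exact ⟨hr, by nlinarith, by nlinarith⟩
  have hr := intervalIntegrable_one_div_sqrt_chord (show (0:ℝ) ≤ 1/6 by norm_num)
  have hq := hr.one_div_sqrt_of_le (by norm_num) (by fun_prop)
    fun x hx => ⟨(cubic_bounds x hx).1, (cubic_bounds x hx).2.1⟩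
  have hp := hr.one_div_sqrt_of_le (q := fun x => 38/9 * ((1/6 - x) * (x - 0))) (by norm_num)
    (by fun_prop) fun x hx => ⟨(cubic_bounds x hx).1, by linarith [(cubic_bounds x hx).1]⟩
  have sqrt38_lt : √38 < 12 := (sqrt_lt' (by norm_num)).2 (by norm_num)
  refine ⟨?_, ?_⟩
  · calc 3 * π / √38 = (∫ x in (0:ℝ)..(1/6), 1 / √((1/6 - x) * (x - 0))) / √(38/9) := by
          rw [integral_one_div_sqrt_chord (by norm_num), sqrt_div' _ (by norm_num : (0:ℝ) ≤ 9),
            show (9:ℝ) = 3 ^ 2 by norm_num, sqrt_sq (by norm_num)]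
          field_simp
      _ = ∫ x in (0:ℝ)..(1/6), 1 / √(38/9 * ((1/6 - x) * (x - 0))) :=
          (integral_one_div_sqrt_const_mul _ (by norm_num) _ _).symm
      _ < _ := integral_lt_integral_of_lt_on_Ioo (by norm_num) hp hq fun x hx => by
          obtain ⟨hr0, hle, hlt⟩ := cubic_bounds x hx
          exact one_div_lt_one_div_of_lt (sqrt_pos.2 (hr0.trans_le hle))
            (sqrt_lt_sqrt (hr0.le.trans hle) hlt)
  · calc π / 4 = 3 * π / 12 := by ring
      _ < 3 * π / √38 := div_lt_div_of_pos_left (by positivity) (by positivity) sqrt38_lt
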